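/- Let 0≤b<a≤1, Δ=a−b, ρ>0, and define h(t) = (ρ/Δ²)·log t · (1 + √(2ρ log t/((t−1)Δ²)))^{−2} and f(n) = ∫_2^n min(h'(s),1) ds − h(2). For the UCB(ρ) policy in the environment θ=(δ_a,δ_b), for every n≥2 one has T_2(n) ≥ f(n); consequently the expected regret satisfies E_θ[R_n] ≥ Δ·f(n). -/

import Mathlib

open MeasureTheory ProbabilityTheory Filter Asymptotics

noncomputable section

namespace Bandit

/-- Empirical mean of the first `s` values of the sequence `x`. -/
def empMean (x : ℕ → ℝ) (s : ℕ) : ℝ := (∑ u ∈ Finset.range s, x u) / s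

/-- An element of `Fin K` maximizing `g`. -/
def argmaxFin {K : ℕ} (hK : 0 < K) (g : Fin K → ℝ) : Fin K :=
  (Finset.univ.exists_max_image g ⟨⟨0, hK⟩, Finset.mem_univ _⟩).choose

theorem argmaxFin_spec {K : ℕ} (hK : 0 < K) (g : Fin K → ℝ) (j : Fin K) :
    g j ≤ g (argmaxFin hK g) := by
  have h := (Finset.univ.exists_max_image g ⟨⟨0, hK⟩, Finset.mem_univ _⟩).choose_spec
  exact h.2 j (Finset.mem_univ j)

/-- The arm pulled at round `t` by a generalized UCB policy with exploration functions `f`,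
given the reward table `x` (where `x k u` is the reward of the `(u+1)`-th pull of arm `k`)
and the vector `T` of numbers of pulls of each arm before round `t`.
During the first `K` rounds (`t ≤ K`), each arm is pulled once; afterwards an arm maximizing
the UCB index `X̂_{k,T_k(t-1)} + √(f_k(t) / T_k(t-1))` is pulled. -/
def ucbArmAux {K : ℕ} (hK : 0 < K) (f : Fin K → ℕ → ℝ) (x : Fin K → ℕ → ℝ)
    (T : Fin K → ℕ) (t : ℕ) : Fin K :=
  if h : t ≤ K then ⟨t - 1, by omega⟩
  else argmaxFin hK fun j => empMean (x j) (T j) + Real.sqrt (f j t / (T j : ℝ))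

/-- `ucbCount hK f x t k` is `T_k(t)`, the number of pulls of arm `k` during rounds `1,…,t`
by the generalized UCB policy with exploration functions `f` on the reward table `x`. -/
def ucbCount {K : ℕ} (hK : 0 < K) (f : Fin K → ℕ → ℝ) (x : Fin K → ℕ → ℝ) :
    ℕ → Fin K → ℕ
  | 0, _ => 0
  | t + 1, k =>
    ucbCount hK f x t k + if ucbArmAux hK f x (ucbCount hK f x t) (t + 1) = k then 1 else 0

/-- The arm pulled at round `t ≥ 1` by the generalized UCB policy. -/
def ucbArm {K : ℕ} (hK : 0 < K) (f : Fin K → ℕ → ℝ) (x : Fin K → ℕ → ℝ) (t : ℕ) : Fin K :=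
  ucbArmAux hK f x (ucbCount hK f x (t - 1)) t

/-- The exploration function of the UCB(ρ) policy: `f_k(t) = ρ log t` for every arm. -/
def rhoLog {K : ℕ} (ρ : ℝ) : Fin K → ℕ → ℝ := fun _ t => ρ * Real.log t

/-- The reward table of the two-armed deterministic environment `θ = (δ_a, δ_b)`:
arm `0` always gives `a` and arm `1` always gives `b`. -/
def diracTable (a b : ℝ) : Fin 2 → ℕ → ℝ := fun k _ => if k = 0 then a else b

end Bandit

/-!
Induction on `n`. If UCB(ρ) pulls the suboptimal arm at round `m + 1`, then `T₂` grows by one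
while `f` grows by `∫_m^{m+1} min(h', 1) ≤ 1`. If it pulls the optimal arm, its index dominates:
`b + √(ρ log(m+1) / T₂) ≤ a + √(ρ log(m+1) / T₁)` with `T₁ + T₂ = m`. When `T₁ ≥ m / 2` the
bonus of the optimal arm is at most `Δ √(2ρ log(m+1) / (m Δ²))`, which yields `T₂ ≥ h(m+1)`;
otherwise `T₂ > m / 2 ≥ h(m+1)` directly. Since `min(h', 1) ≤ h'`, also
`f(m+1) ≤ h(m+1) - 2 h(2) ≤ h(m+1)`.
-/

namespace Bandit

open Set

section UCB

variable {K : ℕ} (hK : 0 < K) (f : Fin K → ℕ → ℝ) (x : Fin K → ℕ → ℝ)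

def ucbIndex (T : Fin K → ℕ) (t : ℕ) (j : Fin K) : ℝ :=
  empMean (x j) (T j) + √(f j t / T j)

theorem ucbCount_succ (t : ℕ) (k : Fin K) :
    ucbCount hK f x (t + 1) k =
      ucbCount hK f x t k + if ucbArm hK f x (t + 1) = k then 1 else 0 :=
  rfl

theorem sum_ucbCount (t : ℕ) : ∑ k, ucbCount hK f x t k = t := by
  induction t with
  | zero => simp [ucbCount]
  | succ t ih => simp [ucbCount_succ, Finset.sum_add_distrib, ih]

theorem ucbCount_of_le {t : ℕ} (ht : t ≤ K) (k : Fin K) :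
    ucbCount hK f x t k = if k.val < t then 1 else 0 := by
  induction t with
  | zero => simp [ucbCount]
  | succ t ih =>
    have harm : ucbArm hK f x (t + 1) = ⟨t, by omega⟩ := by
      simp only [ucbArm, ucbArmAux, dif_pos ht]
      rfl
    rw [ucbCount_succ, ih (by omega), harm]
    split_ifs <;> simp_all [Fin.ext_iff] <;> omega

theorem ucbCount_self (k : Fin K) : ucbCount hK f x K k = 1 := by
  simp [ucbCount_of_le hK f x le_rfl k, k.isLt]

theorem ucbCount_mono (k : Fin K) : Monotone (ucbCount hK f x · k) :=
  monotone_nat_of_le_succ fun t => by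
    rw [ucbCount_succ]
    exact Nat.le_add_right _ _

theorem one_le_ucbCount {t : ℕ} (ht : K ≤ t) (k : Fin K) : 1 ≤ ucbCount hK f x t k :=
  ucbCount_self hK f x k ▸ ucbCount_mono hK f x k ht

theorem ucbIndex_le_ucbArm {t : ℕ} (ht : K < t) (j : Fin K) :
    ucbIndex f x (ucbCount hK f x (t - 1)) t j ≤
      ucbIndex f x (ucbCount hK f x (t - 1)) t (ucbArm hK f x t) := by
  rw [ucbArm, ucbArmAux, dif_neg (by omega)]
  exact argmaxFin_spec hK _ j

end UCB

theorem empMean_const (c : ℝ) {s : ℕ} (hs : s ≠ 0) : empMean (fun _ => c) s = c := by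
  simp [empMean, hs]

/-- The paper's `h`. -/
def ucbThreshold (ρ Δ t : ℝ) : ℝ :=
  ρ / Δ ^ 2 * Real.log t / (1 + √(2 * ρ * Real.log t / ((t - 1) * Δ ^ 2))) ^ 2

theorem ucbThreshold_nonneg {ρ : ℝ} (hρ : 0 ≤ ρ) (Δ : ℝ) {t : ℝ} (ht : 1 ≤ t) :
    0 ≤ ucbThreshold ρ Δ t := by
  have := Real.log_nonneg ht
  unfold ucbThreshold
  positivity

theorem contDiffOn_ucbThreshold {ρ Δ : ℝ} (hρ : ρ ≠ 0) (hΔ : Δ ≠ 0) (n : WithTop ℕ∞) :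
    ContDiffOn ℝ n (ucbThreshold ρ Δ) (Ioi 1) := by
  intro t (ht : 1 < t)
  have hlog : ContDiffAt ℝ n Real.log t := Real.contDiffAt_log.mpr (by positivity)
  have hden : (t - 1) * Δ ^ 2 ≠ 0 := mul_ne_zero (sub_ne_zero.2 ht.ne') (pow_ne_zero 2 hΔ)
  have hratio : 2 * ρ * Real.log t / ((t - 1) * Δ ^ 2) ≠ 0 :=
    div_ne_zero (mul_ne_zero (mul_ne_zero two_ne_zero hρ) (Real.log_pos ht).ne') hden
  refine ContDiffAt.contDiffWithinAt ((contDiffAt_const.mul hlog).div (((contDiffAt_const.add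
    (((contDiffAt_const.mul hlog).div ((contDiffAt_id.sub contDiffAt_const).mul
      contDiffAt_const) hden).sqrt hratio)).pow 2)) ?_)
  positivity

theorem ucbThreshold_le_of_index_le {ρ Δ T₀ T₁ : ℝ} (hρ : 0 ≤ ρ) (hΔ : 0 < Δ)
    (hT₀ : 0 < T₀) (hT₁ : 0 < T₁)
    (hle : √(ρ * Real.log (T₀ + T₁ + 1) / T₁) ≤ Δ + √(ρ * Real.log (T₀ + T₁ + 1) / T₀)) :
    ucbThreshold ρ Δ (T₀ + T₁ + 1) ≤ T₁ := by
  unfold ucbThreshold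
  rw [add_sub_cancel_right]
  set L := Real.log (T₀ + T₁ + 1)
  have hL : 0 ≤ L := Real.log_nonneg (by linarith)
  have hρL : 0 ≤ ρ * L := mul_nonneg hρ hL
  set g := √(2 * ρ * L / ((T₀ + T₁) * Δ ^ 2))
  have hg : 0 ≤ g := Real.sqrt_nonneg _
  have hg2 : g ^ 2 = 2 * ρ * L / ((T₀ + T₁) * Δ ^ 2) := Real.sq_sqrt (by positivity)
  rw [div_le_iff₀ (by positivity)]
  rcases le_or_gt (T₀ + T₁) (2 * T₀) with hT | hT
  · -- many pulls of the optimal arm: its exploration bonus is at most `Δ g`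
    have hbonus : √(ρ * L / T₀) ≤ Δ * g := by
      calc √(ρ * L / T₀) ≤ √(Δ ^ 2 * g ^ 2) := by
            apply Real.sqrt_le_sqrt
            rw [hg2, div_le_iff₀ hT₀]
            field_simp
            nlinarith
        _ = Δ * g := by rw [Real.sqrt_mul (sq_nonneg _), Real.sqrt_sq hΔ.le, Real.sqrt_sq hg]
    have hsq : ρ * L / T₁ ≤ (Δ * (1 + g)) ^ 2 := by
      rw [← Real.sqrt_le_left (by positivity)]
      linarith
    rw [div_le_iff₀ hT₁] at hsq
    rw [div_mul_eq_mul_div, div_le_iff₀ (by positivity)]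
    nlinarith
  · -- otherwise `T₁ > (T₀ + T₁) / 2 = ρ L / (Δ g)²`
    have hΔg : ρ / Δ ^ 2 * L = (T₀ + T₁) / 2 * g ^ 2 := by
      rw [hg2]
      field_simp
    rw [hΔg]
    nlinarith

section Calculus

variable {φ : ℝ → ℝ} {c : ℝ} (hφ : ContDiffOn ℝ 1 φ (Ioi c))
include hφ

theorem continuousOn_deriv_uIcc {p q : ℝ} (hp : c < p) (hq : c < q) :
    ContinuousOn (deriv φ) (uIcc p q) :=
  (hφ.continuousOn_deriv_of_isOpen isOpen_Ioi le_rfl).mono fun _ hs => (lt_min hp hq).trans_le hs.1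

theorem intervalIntegrable_min_deriv {p q : ℝ} (hp : c < p) (hq : c < q) :
    IntervalIntegrable (fun s => min (deriv φ s) 1) volume p q :=
  ((continuous_id.min continuous_const).comp_continuousOn
    (continuousOn_deriv_uIcc hφ hp hq)).intervalIntegrable

theorem integral_min_deriv_le_sub {p q : ℝ} (hp : c < p) (hpq : p ≤ q) :
    ∫ s in p..q, min (deriv φ s) 1 ≤ φ q - φ p := by
  have hint : IntervalIntegrable (deriv φ) volume p q :=
    (continuousOn_deriv_uIcc hφ hp (hp.trans_le hpq)).intervalIntegrable
  have hint_min := intervalIntegrable_min_deriv hφ hp (hp.trans_le hpq)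
  have hdiff : ∀ s ∈ uIcc p q, DifferentiableAt ℝ φ s := fun s hs =>
    (hφ.contDiffAt (Ioi_mem_nhds (hp.trans_le ((le_min le_rfl hpq).trans hs.1)))).differentiableAt
      one_ne_zero
  calc ∫ s in p..q, min (deriv φ s) 1 ≤ ∫ s in p..q, deriv φ s :=
        intervalIntegral.integral_mono_on hpq hint_min hint fun s _ => min_le_left _ _
    _ = φ q - φ p := intervalIntegral.integral_deriv_eq_sub hdiff hint

theorem integral_min_deriv_le {p q : ℝ} (hp : c < p) (hpq : p ≤ q) :
    ∫ s in p..q, min (deriv φ s) 1 ≤ q - p := by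
  calc ∫ s in p..q, min (deriv φ s) 1 ≤ ∫ _ in p..q, (1 : ℝ) :=
        intervalIntegral.integral_mono_on hpq
          (intervalIntegrable_min_deriv hφ hp (hp.trans_le hpq))
          intervalIntegrable_const fun s _ => min_le_right _ _
    _ = q - p := by simp

end Calculus

/-- The paper's `f`. -/
def pullLowerBound (φ : ℝ → ℝ) (x : ℝ) : ℝ := (∫ s in (2 : ℝ)..x, min (deriv φ s) 1) - φ 2

section PullLowerBound

variable {φ : ℝ → ℝ} {c : ℝ} (hφ : ContDiffOn ℝ 1 φ (Ioi c)) (hc : c < 2)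
include hφ hc

theorem pullLowerBound_le {x : ℝ} (hx : 2 ≤ x) (h2 : 0 ≤ φ 2) : pullLowerBound φ x ≤ φ x := by
  have := integral_min_deriv_le_sub hφ hc hx
  unfold pullLowerBound
  linarith

theorem pullLowerBound_add_one_le {x : ℝ} (hx : 2 ≤ x) :
    pullLowerBound φ (x + 1) ≤ pullLowerBound φ x + 1 := by
  have hstep := integral_min_deriv_le hφ (hc.trans_le hx) (le_add_of_nonneg_right zero_le_one)
  unfold pullLowerBound
  rw [← intervalIntegral.integral_add_adjacent_intervals
    (intervalIntegrable_min_deriv hφ hc (hc.trans_le hx))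
    (intervalIntegrable_min_deriv hφ (hc.trans_le hx) (by linarith))]
  linarith

end PullLowerBound

section Dirac

variable {ρ a b : ℝ}

theorem empMean_diracTable (k : Fin 2) {s : ℕ} (hs : s ≠ 0) :
    empMean (diracTable a b k) s = if k = 0 then a else b :=
  empMean_const _ hs

theorem ucbThreshold_le_ucbCount_of_ucbArm_eq_zero (hρ : 0 ≤ ρ) (hba : b < a) {m : ℕ}
    (hm : 2 ≤ m) (harm : ucbArm (Nat.succ_pos 1) (rhoLog ρ) (diracTable a b) (m + 1) = 0) :
    ucbThreshold ρ (a - b) (m + 1 : ℕ) ≤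
      ucbCount (Nat.succ_pos 1) (rhoLog ρ) (diracTable a b) m 1 := by
  have hindex := ucbIndex_le_ucbArm (Nat.succ_pos 1) (rhoLog ρ) (diracTable a b)
    (by omega : 2 < m + 1) 1
  rw [harm, Nat.add_sub_cancel] at hindex
  set T := ucbCount (Nat.succ_pos 1) (rhoLog ρ) (diracTable a b) m
  have hT : ∀ k, T k ≠ 0 := fun k => Nat.one_le_iff_ne_zero.mp (one_le_ucbCount _ _ _ hm k)
  have hround : ((m + 1 : ℕ) : ℝ) = T 0 + T 1 + 1 := by
    rw [← sum_ucbCount (Nat.succ_pos 1) (rhoLog ρ) (diracTable a b) m, Fin.sum_univ_two]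
    push_cast
    rfl
  simp only [ucbIndex, rhoLog, hround, empMean_diracTable _ (hT 0), empMean_diracTable _ (hT 1),
    Fin.isValue, Fin.one_eq_zero_iff, Nat.succ_ne_self, ite_true, ite_false] at hindex
  rw [hround]
  refine ucbThreshold_le_of_index_le hρ (sub_pos.2 hba) ?_ ?_ (by linarith)
  all_goals exact_mod_cast Nat.pos_of_ne_zero (hT _)

theorem pullLowerBound_le_ucbCount (hρ : 0 < ρ) (hba : b < a) {m : ℕ} (hm : 2 ≤ m) :
    pullLowerBound (ucbThreshold ρ (a - b)) m ≤
      ucbCount (Nat.succ_pos 1) (rhoLog ρ) (diracTable a b) m 1 := by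
  have hφ := contDiffOn_ucbThreshold hρ.ne' (sub_pos.2 hba).ne' 1
  induction m, hm using Nat.le_induction with
  | base =>
    have := ucbThreshold_nonneg hρ.le (a - b) one_le_two
    simp [pullLowerBound, ucbCount_self]
    linarith
  | succ m hm ih =>
    have hm' : (2 : ℝ) ≤ m := mod_cast hm
    rw [ucbCount_succ]
    have hfin2 : ∀ k : Fin 2, k = 0 ∨ k = 1 := by decide
    obtain harm | harm := hfin2 (ucbArm (Nat.succ_pos 1) (rhoLog ρ) (diracTable a b) (m + 1))
    · calc pullLowerBound (ucbThreshold ρ (a - b)) (m + 1 : ℕ)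
          ≤ ucbThreshold ρ (a - b) (m + 1 : ℕ) :=
            pullLowerBound_le hφ one_lt_two (by push_cast; linarith)
              (ucbThreshold_nonneg hρ.le _ one_le_two)
        _ ≤ _ := ucbThreshold_le_ucbCount_of_ucbArm_eq_zero hρ.le hba hm harm
        _ = _ := by simp [harm]
    · calc pullLowerBound (ucbThreshold ρ (a - b)) (m + 1 : ℕ)
          ≤ pullLowerBound (ucbThreshold ρ (a - b)) m + 1 := by
            push_cast
            exact pullLowerBound_add_one_le hφ one_lt_two hm'
        _ ≤ _ := by simp [harm, ih]

end Dirac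

theorem ucbRho_dirac_pull_and_regret_lower_bound_general
    (ρ : ℝ) (hρ : 0 < ρ) (a b : ℝ) (hba : b < a)
    (Δ : ℝ) (hΔ : Δ = a - b)
    (h : ℝ → ℝ)
    (hh : ∀ t : ℝ, h t =
      ρ / Δ ^ 2 * Real.log t /
        (1 + Real.sqrt (2 * ρ * Real.log t / ((t - 1) * Δ ^ 2))) ^ 2)
    (f : ℕ → ℝ)
    (hf : ∀ n : ℕ, f n = (∫ s in (2 : ℝ)..(n : ℝ), min (deriv h s) 1) - h 2)
    (n : ℕ) (hn : 2 ≤ n) :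
    f n ≤ (ucbCount (Nat.succ_pos 1) (rhoLog ρ) (diracTable a b) n 1 : ℝ) ∧
    Δ * f n ≤ Δ * (ucbCount (Nat.succ_pos 1) (rhoLog ρ) (diracTable a b) n 1 : ℝ) := by
  subst hΔ
  obtain rfl : h = ucbThreshold ρ (a - b) := funext hh
  have hpull : f n ≤ ucbCount (Nat.succ_pos 1) (rhoLog ρ) (diracTable a b) n 1 :=
    hf n ▸ pullLowerBound_le_ucbCount hρ hba hn
  exact ⟨hpull, mul_le_mul_of_nonneg_left hpull (sub_nonneg.2 hba.le)⟩

/-- Let 0 ≤ b < a ≤ 1, Δ = a - b, ρ > 0, and define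
`h t = (ρ/Δ²)·log t·(1 + √(2ρ log t/((t-1)Δ²)))⁻²` and
`f n = ∫_2^n min(h'(s), 1) ds − h 2`. For UCB(ρ) in the environment θ = (δ_a, δ_b),
for every n ≥ 2 one has T_2(n) ≥ f(n); consequently the expected regret
E_θ[R_n] = Δ·T_2(n) satisfies E_θ[R_n] ≥ Δ·f(n). -/
theorem ucbRho_dirac_pull_and_regret_lower_bound
    (ρ : ℝ) (hρ : 0 < ρ) (a b : ℝ) (hb : 0 ≤ b) (hba : b < a) (ha : a ≤ 1)
    (Δ : ℝ) (hΔ : Δ = a - b)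
    (h : ℝ → ℝ)
    (hh : ∀ t : ℝ, h t =
      ρ / Δ ^ 2 * Real.log t /
        (1 + Real.sqrt (2 * ρ * Real.log t / ((t - 1) * Δ ^ 2))) ^ 2)
    (f : ℕ → ℝ)
    (hf : ∀ n : ℕ, f n = (∫ s in (2 : ℝ)..(n : ℝ), min (deriv h s) 1) - h 2)
    (n : ℕ) (hn : 2 ≤ n) :
    f n ≤ (ucbCount (Nat.succ_pos 1) (rhoLog ρ) (diracTable a b) n 1 : ℝ) ∧
    Δ * f n ≤ Δ * (ucbCount (Nat.succ_pos 1) (rhoLog ρ) (diracTable a b) n 1 : ℝ) :=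
  ucbRho_dirac_pull_and_regret_lower_bound_general ρ hρ a b hba Δ hΔ h hh f hf n hn

end Bandit
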